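/- arXiv:1411.1019 — 2 statements merged into one kernel-verified Lean document; each statement's English description precedes it below -/
import Mathlib

section
/- If f₀ ∈ L¹(ℝ²) ∩ L^∞(ℝ²), then the self-similar solution g̃ satisfies, for every s > 0, ‖g̃(s,·,·)‖_{L^∞(ℝ²)} ≤ min{ (√3/(2π)) (1 − e^{−s})^{−2} ‖f₀‖_{L¹}, e^{2s} ‖f₀‖_{L^∞} }. -/
/-!
At time `s` the self-similar solution is `e^{2s} (G_t * f₀)` with `t = e^s - 1`, evaluated at
rescaled points, so its sup norm is `e^{2s} ‖G_t * f₀‖_∞`. Completing the square in `v` writes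
`G_t` as a product of two Gaussians: it is nonnegative, bounded by its peak value
`√3 / (2π t²)`, and has unit mass. Hence `‖G_t * f₀‖_∞` is bounded both by
`√3 / (2π t²) ‖f₀‖₁` and by `‖f₀‖_∞`, and `e^{2s} / (e^s - 1)² = (1 - e^{-s})⁻²`.
-/

open Real MeasureTheory

/-- The Kolmogorov kernel in Lagrangian variables. -/
noncomputable def G (t v z : ℝ) : ℝ :=
  (Real.sqrt 3 / (2 * Real.pi * t ^ 2)) *
    Real.exp (-(1 / (4 * t ^ 3)) * (3 * z ^ 2 + (2 * t * v - 3 * z) ^ 2))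

/-- The solution of the Lagrangian Kolmogorov equation: `g(t) = G_t * f₀`. -/
noncomputable def sol (f₀ : ℝ × ℝ → ℝ) (t v z : ℝ) : ℝ :=
  ∫ y : ℝ × ℝ, G t (v - y.1) (z - y.2) * f₀ y

/-- The self-similar solution. -/
noncomputable def tg (f₀ : ℝ × ℝ → ℝ) (s v z : ℝ) : ℝ :=
  Real.exp (2 * s) * sol f₀ (Real.exp s - 1) (Real.exp (s / 2) * v) (Real.exp (3 * s / 2) * z)

section ProductIntegralBounds

variable {α : Type*} [MeasurableSpace α] {μ : Measure α} {K f : α → ℝ}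

theorem abs_integral_mul_le_mul_lpNorm_one {C : ℝ} (hK : ∀ᵐ x ∂μ, |K x| ≤ C)
    (hf : Integrable f μ) : |∫ x, K x * f x ∂μ| ≤ C * lpNorm f 1 μ := by
  rw [lpNorm_one_eq_integral_norm hf.aestronglyMeasurable, ← integral_const_mul]
  refine abs_integral_le_integral_abs.trans <|
    integral_mono_of_nonneg (.of_forall fun _ => abs_nonneg _) (hf.norm.const_mul C) ?_
  filter_upwards [hK] with x hx
  rw [abs_mul, ← Real.norm_eq_abs (f x)]
  exact mul_le_mul_of_nonneg_right hx (norm_nonneg _)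

theorem abs_integral_mul_le_integral_abs_mul_lpNorm_top (hK : Integrable K μ)
    (hf : MemLp f ⊤ μ) : |∫ x, K x * f x ∂μ| ≤ (∫ x, |K x| ∂μ) * lpNorm f ⊤ μ := by
  rw [← integral_mul_const]
  refine abs_integral_le_integral_abs.trans <|
    integral_mono_of_nonneg (.of_forall fun _ => abs_nonneg _) (hK.abs.mul_const _) ?_
  filter_upwards [ae_le_lpNorm_exponent_top hf] with x hx
  rw [abs_mul, ← Real.norm_eq_abs (f x)]
  exact mul_le_mul_of_nonneg_left hx (abs_nonneg _)

end ProductIntegralBounds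

theorem G_nonneg (t v z : ℝ) : 0 ≤ G t v z := by
  unfold G; positivity

theorem G_le {t : ℝ} (ht : 0 ≤ t) (v z : ℝ) : G t v z ≤ √3 / (2 * π * t ^ 2) := by
  refine mul_le_of_le_one_right (by positivity) (exp_le_one_iff.2 ?_)
  rw [neg_mul, neg_nonpos]
  positivity

theorem G_eq_mul_exp_mul_exp {t : ℝ} (ht : t ≠ 0) (v z : ℝ) :
    G t v z = √3 / (2 * π * t ^ 2) * exp (-(3 / (4 * t ^ 3)) * z ^ 2) *
      exp (-(1 / t) * (v - 3 / (2 * t) * z) ^ 2) := by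
  rw [G, mul_assoc (√3 / _), ← exp_add]
  congr 2
  field_simp
  ring

theorem integrable_G_fst {t : ℝ} (ht : 0 < t) (z : ℝ) : Integrable (fun v => G t v z) := by
  simp_rw [G_eq_mul_exp_mul_exp ht.ne']
  exact ((integrable_exp_neg_mul_sq (by positivity)).comp_sub_right _).const_mul _

theorem integral_G_fst {t : ℝ} (ht : 0 < t) (z : ℝ) :
    ∫ v, G t v z = √3 / (2 * π * t ^ 2) * √(π * t) * exp (-(3 / (4 * t ^ 3)) * z ^ 2) := by
  simp_rw [G_eq_mul_exp_mul_exp ht.ne']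
  rw [integral_const_mul, integral_sub_right_eq_self (fun v => exp (-(1 / t) * v ^ 2)),
    integral_gaussian, div_div_eq_mul_div, div_one]
  ring

theorem integrable_G {t : ℝ} (ht : 0 < t) : Integrable (fun p : ℝ × ℝ => G t p.1 p.2) := by
  rw [Measure.volume_eq_prod, integrable_prod_iff' (by unfold G; fun_prop)]
  refine ⟨.of_forall (integrable_G_fst ht), ?_⟩
  simp_rw [Real.norm_of_nonneg (G_nonneg _ _ _), integral_G_fst ht]
  exact (integrable_exp_neg_mul_sq (by positivity)).const_mul _

theorem integral_G {t : ℝ} (ht : 0 < t) : ∫ p : ℝ × ℝ, G t p.1 p.2 = 1 := by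
  have hG := integrable_G ht
  rw [Measure.volume_eq_prod] at hG ⊢
  rw [integral_prod_symm _ hG]
  simp_rw [integral_G_fst ht]
  rw [integral_const_mul, integral_gaussian, mul_assoc, ← sqrt_mul (by positivity),
    show π * t * (π / (3 / (4 * t ^ 3))) = (2 * π * t ^ 2) ^ 2 / 3 by field_simp; ring,
    sqrt_div' _ (by norm_num), sqrt_sq (by positivity)]
  field_simp

theorem abs_sol_le_mul_lpNorm_one {f₀ : ℝ × ℝ → ℝ} (hf₀ : Integrable f₀) {t : ℝ} (ht : 0 ≤ t)
    (v z : ℝ) : |sol f₀ t v z| ≤ √3 / (2 * π * t ^ 2) * lpNorm f₀ 1 volume :=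
  abs_integral_mul_le_mul_lpNorm_one
    (.of_forall fun _ => (abs_of_nonneg (G_nonneg _ _ _)).trans_le (G_le ht _ _)) hf₀

theorem abs_sol_le_lpNorm_top {f₀ : ℝ × ℝ → ℝ} (hf₀ : MemLp f₀ ⊤) {t : ℝ} (ht : 0 < t)
    (v z : ℝ) : |sol f₀ t v z| ≤ lpNorm f₀ ⊤ volume := by
  have hK := (integrable_G ht).comp_sub_left (v, z)
  have hK₁ : ∫ y : ℝ × ℝ, |G t (v - y.1) (z - y.2)| = 1 := by
    simp_rw [abs_of_nonneg (G_nonneg _ _ _)]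
    exact (integral_sub_left_eq_self (fun p : ℝ × ℝ => G t p.1 p.2) volume (v, z)).trans
      (integral_G ht)
  simpa [sol, hK₁] using abs_integral_mul_le_integral_abs_mul_lpNorm_top hK hf₀

theorem exp_two_mul_div_sq_exp_sub_one (s : ℝ) :
    exp (2 * s) / (exp s - 1) ^ 2 = (1 - exp (-s))⁻¹ ^ 2 := by
  have h : 1 - exp (-s) = (exp s - 1) / exp s := by
    rw [exp_neg]
    field_simp
  rw [h, inv_div, div_pow, ← exp_nat_mul]
  norm_num

/-- If `f₀ ∈ L¹ ∩ L^∞`, then for every `s > 0`,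
`‖g̃(s)‖_∞ ≤ min{(√3/(2π))(1-e^{-s})^{-2} ‖f₀‖₁, e^{2s} ‖f₀‖_∞}`. -/
theorem stmt_7 (f₀ : ℝ × ℝ → ℝ)
    (hf₁ : MemLp f₀ 1 volume) (hfInf : MemLp f₀ ⊤ volume) :
    ∀ s : ℝ, 0 < s →
      eLpNorm (fun x : ℝ × ℝ => tg f₀ s x.1 x.2) ⊤ volume
        ≤ ENNReal.ofReal (min
            (Real.sqrt 3 / (2 * Real.pi) * (1 - Real.exp (-s))⁻¹ ^ 2
              * (eLpNorm f₀ 1 volume).toReal)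
            (Real.exp (2 * s) * (eLpNorm f₀ ⊤ volume).toReal)) := by
  intro s hs
  have ht : 0 < exp s - 1 := sub_pos.2 (Real.one_lt_exp_iff.2 hs)
  rw [eLpNorm_exponent_top]
  refine eLpNormEssSup_le_of_ae_bound (.of_forall fun x => ?_)
  rw [Real.norm_eq_abs, tg, abs_mul, abs_of_pos (exp_pos _), toReal_eLpNorm hf₁.1,
    toReal_eLpNorm hfInf.1]
  refine le_min ?_ (mul_le_mul_of_nonneg_left (abs_sol_le_lpNorm_top hfInf ht _ _) (exp_pos _).le)
  calc _ ≤ exp (2 * s) * (√3 / (2 * π * (exp s - 1) ^ 2) * lpNorm f₀ 1 volume) :=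
        mul_le_mul_of_nonneg_left
          (abs_sol_le_mul_lpNorm_one (memLp_one_iff_integrable.1 hf₁) ht.le _ _) (exp_pos _).le
    _ = _ := by
        rw [← exp_two_mul_div_sq_exp_sub_one, div_mul_eq_div_div]
        ring
end

section
/- Let Ω = (0,1)² and t ≥ 0. Then for every g ∈ H₀¹(Ω), ‖g‖_{L²(Ω)} ≤ (1/(√2 C(t))) ‖∂_v g + t ∂_z g‖_{L²(Ω)}, where C(t) = 1 if 0 ≤ t ≤ 1 and C(t) = t if t > 1. -/
/-!
On the line `s ↦ (s, z + t s)` the derivative of `g` is the directional derivative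
`∂_v g + t ∂_z g`, and the line meets the square in an interval of length at most `1 / max t 1`.
A `C¹` function `f` supported in an interval `(a, a + ℓ)` satisfies `f(x)² ≤ (x - a) ∫ f'²`
by Cauchy–Schwarz, hence the one-dimensional Poincaré inequality `∫ f² ≤ ℓ²/2 ∫ f'²`.
Applying it on every line and integrating over `z`, which the measure-preserving shear
`(v, z) ↦ (v, z + t v)` allows, gives the inequality on the whole plane; the boundary of the
square is a null set, so the integrals may be restricted to it.
-/

open Real MeasureTheory Set Function

theorem sq_integral_le_measureReal_mul_integral_sq {α : Type*} [MeasurableSpace α]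
    {μ : Measure α} [IsFiniteMeasure μ] {f : α → ℝ} (hf : Integrable f μ)
    (hf2 : Integrable (fun x => f x ^ 2) μ) :
    (∫ x, f x ∂μ) ^ 2 ≤ μ.real univ * ∫ x, f x ^ 2 ∂μ := by
  rcases eq_zero_or_neZero μ with rfl | _
  · simp
  have hμ : 0 < μ.real univ := measureReal_univ_pos
  have jensen := (even_two.convexOn_pow (𝕜 := ℝ)).map_average_le
    (continuous_pow 2).continuousOn isClosed_univ (ae_of_all _ fun x => mem_univ (f x)) hf hf2
  rw [average_eq, average_eq, smul_eq_mul, smul_eq_mul] at jensen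
  field_simp at jensen
  nlinarith

theorem Continuous.integrable_sq_of_hasCompactSupport {X : Type*} [TopologicalSpace X]
    [MeasurableSpace X] [OpensMeasurableSpace X] {μ : Measure X} [IsFiniteMeasureOnCompacts μ]
    {f : X → ℝ} (hf : Continuous f) (hfc : HasCompactSupport f) : Integrable (fun x => f x ^ 2) μ :=
  (hf.pow 2).integrable_of_hasCompactSupport (hfc.comp_left (zero_pow two_ne_zero))

theorem sq_le_mul_intervalIntegral_deriv_sq {f : ℝ → ℝ} {a x : ℝ} (hf : ContDiff ℝ 1 f)
    (hfa : f a = 0) (hax : a ≤ x) :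
    f x ^ 2 ≤ (x - a) * ∫ y in a..x, deriv f y ^ 2 := by
  have hf' : Continuous (deriv f) := hf.continuous_deriv le_rfl
  have ftc : ∫ y in a..x, deriv f y = f x := by
    rw [intervalIntegral.integral_deriv_eq_sub
      (fun y _ => (hf.differentiable one_ne_zero).differentiableAt) (hf'.intervalIntegrable a x),
      hfa, sub_zero]
  have cs := sq_integral_le_measureReal_mul_integral_sq (μ := volume.restrict (Ioc a x))
    (hf'.integrableOn_Icc.mono_set Ioc_subset_Icc_self)
    ((hf'.pow 2).integrableOn_Icc.mono_set Ioc_subset_Icc_self)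
  rwa [measureReal_restrict_apply_univ, volume_real_Ioc_of_le hax,
    ← intervalIntegral.integral_of_le hax, ← intervalIntegral.integral_of_le hax, ftc] at cs

theorem integral_sq_le_of_support_subset_Ioo {f : ℝ → ℝ} {a b : ℝ} (hf : ContDiff ℝ 1 f)
    (hsupp : support f ⊆ Ioo a b) :
    ∫ x, f x ^ 2 ≤ (b - a) ^ 2 / 2 * ∫ x, deriv f x ^ 2 := by
  rcases lt_or_ge b a with hba | hab
  · have hf0 : f = 0 :=
      support_eq_empty_iff.1 (subset_empty_iff.1 (Ioo_eq_empty hba.not_gt ▸ hsupp))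
    simp [hf0]
  have hfc : HasCompactSupport f :=
    .of_support_subset_isCompact isCompact_Icc (hsupp.trans Ioo_subset_Icc_self)
  have hf0 : ∀ x ∉ Ioo a b, f x = 0 := support_subset_iff'.1 hsupp
  have hJint : Integrable (fun x => deriv f x ^ 2) :=
    (hf.continuous_deriv le_rfl).integrable_sq_of_hasCompactSupport hfc.deriv
  have pointwise : ∀ x ∈ Ioo a b, f x ^ 2 ≤ (x - a) * ∫ x, deriv f x ^ 2 := fun x hx =>
    (sq_le_mul_intervalIntegral_deriv_sq hf (hf0 a (by simp)) hx.1.le).trans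
      (mul_le_mul_of_nonneg_left (by
        rw [intervalIntegral.integral_of_le hx.1.le]
        exact setIntegral_le_integral hJint (.of_forall fun y => sq_nonneg _))
        (sub_nonneg.2 hx.1.le))
  calc ∫ x, f x ^ 2 = ∫ x in Ioo a b, f x ^ 2 :=
        (setIntegral_eq_integral_of_forall_compl_eq_zero fun x hx => by simp [hf0 x hx]).symm
    _ ≤ ∫ x in Ioo a b, (x - a) * ∫ x, deriv f x ^ 2 :=
        setIntegral_mono_on (hf.continuous.integrable_sq_of_hasCompactSupport hfc).integrableOn
          ((by fun_prop : Continuous fun x => (x - a) * ∫ x, deriv f x ^ 2).integrableOn_Icc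
            |>.mono_set Ioo_subset_Icc_self) measurableSet_Ioo pointwise
    _ = (b - a) ^ 2 / 2 * ∫ x, deriv f x ^ 2 := by
        rw [← integral_Ioc_eq_integral_Ioo, ← intervalIntegral.integral_of_le hab,
          intervalIntegral.integral_mul_const,
          intervalIntegral.integral_comp_sub_right (fun x => x), integral_id]
        ring

theorem measurePreserving_shear (t : ℝ) :
    MeasurePreserving (fun p : ℝ × ℝ => (p.1, p.2 + t * p.1)) := by
  rw [Measure.volume_eq_prod]
  exact (MeasurePreserving.id volume).skew_product (g := fun v z => z + t * v) (by fun_prop)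
    (.of_forall fun v => map_add_right_eq_self volume (t * v))

theorem integral_eq_integral_integral_shear {F : ℝ × ℝ → ℝ} (hF : Integrable F) (t : ℝ) :
    ∫ p, F p = ∫ z, ∫ s, F (s, z + t * s) := by
  have hmp := measurePreserving_shear t
  have hshear := hmp.integrable_comp_of_integrable hF
  have hmap := integral_map hmp.measurable.aemeasurable (hmp.map_eq ▸ hF.aestronglyMeasurable)
  rw [hmp.map_eq] at hmap
  rw [hmap, Measure.volume_eq_prod]
  rw [Measure.volume_eq_prod] at hshear
  exact integral_prod_symm _ hshear

theorem integrable_integral_shear {F : ℝ × ℝ → ℝ} (hF : Integrable F) (t : ℝ) :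
    Integrable fun z => ∫ s, F (s, z + t * s) := by
  have h := (measurePreserving_shear t).integrable_comp_of_integrable hF
  rw [Measure.volume_eq_prod] at h
  exact h.integral_prod_right

theorem hasDerivAt_comp_line {g : ℝ × ℝ → ℝ} (hg : Differentiable ℝ g) (t z s : ℝ) :
    HasDerivAt (fun s => g (s, z + t * s)) (fderiv ℝ g (s, z + t * s) (1, t)) s := by
  have hline : HasDerivAt (fun s : ℝ => (s, z + t * s)) ((1 : ℝ), t) s := by
    simpa using (hasDerivAt_id s).prodMk (((hasDerivAt_id s).const_mul t).const_add z)
  exact (hg _).hasFDerivAt.comp_hasDerivAt s hline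

theorem integral_sq_le_of_support_line_subset_Ioo {g : ℝ × ℝ → ℝ} (hg : ContDiff ℝ 1 g)
    (hgc : HasCompactSupport g) {t ℓ : ℝ}
    (hline : ∀ z, ∃ a, support (fun s => g (s, z + t * s)) ⊆ Ioo a (a + ℓ)) :
    ∫ p, g p ^ 2 ≤ ℓ ^ 2 / 2 * ∫ p, fderiv ℝ g p (1, t) ^ 2 := by
  have hg2 := hg.continuous.integrable_sq_of_hasCompactSupport (μ := volume) hgc
  have hD : Continuous fun p => fderiv ℝ g p (1, t) :=
    (hg.continuous_fderiv one_ne_zero).clm_apply continuous_const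
  have hDg := hD.integrable_sq_of_hasCompactSupport (μ := volume) (hgc.fderiv_apply ℝ (1, t))
  rw [integral_eq_integral_integral_shear hg2 t, integral_eq_integral_integral_shear hDg t,
    ← integral_const_mul]
  refine integral_mono (integrable_integral_shear hg2 t)
    ((integrable_integral_shear hDg t).const_mul _) fun z => ?_
  obtain ⟨a, ha⟩ := hline z
  have hslice : ContDiff ℝ 1 fun s => g (s, z + t * s) := hg.comp (by fun_prop)
  simpa only [add_sub_cancel_left,
    (hasDerivAt_comp_line (hg.differentiable one_ne_zero) t z _).deriv] using
    integral_sq_le_of_support_subset_Ioo hslice ha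

theorem exists_support_line_subset_Ioo {g : ℝ × ℝ → ℝ}
    (hsupp : support g ⊆ Ioo 0 1 ×ˢ Ioo 0 1) (t z : ℝ) :
    ∃ a, support (fun s => g (s, z + t * s)) ⊆ Ioo a (a + (max t 1)⁻¹) := by
  rcases le_or_gt t 1 with h | h
  · refine ⟨0, fun s hs => ?_⟩
    rw [max_eq_right h, inv_one, zero_add]
    exact (hsupp hs).1
  · refine ⟨-z / t, fun s hs => ?_⟩
    rw [max_eq_left h.le]
    obtain ⟨-, h0, h1⟩ := hsupp hs
    have ht0 : 0 < t := by linarith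
    dsimp only at h0 h1
    constructor
    · rw [div_lt_iff₀ ht0]; linarith
    · rw [neg_div, ← sub_eq_neg_add, inv_eq_one_div, ← sub_div, lt_div_iff₀ ht0]; linarith

theorem integral_sq_le_of_support_subset_unitSquare {g : ℝ × ℝ → ℝ} (hg : ContDiff ℝ 1 g)
    (hsupp : support g ⊆ Ioo 0 1 ×ˢ Ioo 0 1) (t : ℝ) :
    ∫ p, g p ^ 2 ≤ 1 / (2 * max t 1 ^ 2) * ∫ p, fderiv ℝ g p (1, t) ^ 2 := by
  have hgc : HasCompactSupport g := .of_support_subset_isCompact (isCompact_Icc.prod isCompact_Icc)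
    (hsupp.trans (prod_mono Ioo_subset_Icc_self Ioo_subset_Icc_self))
  convert integral_sq_le_of_support_line_subset_Ioo hg hgc
    (exists_support_line_subset_Ioo hsupp t) using 2
  ring

theorem ae_fderiv_eq_zero_of_support_subset {E F : Type*} [NormedAddCommGroup E]
    [NormedSpace ℝ E] [MeasurableSpace E] [BorelSpace E] [FiniteDimensional ℝ E]
    (μ : Measure E) [μ.IsAddHaarMeasure] [NormedAddCommGroup F] [NormedSpace ℝ F] {g : E → F}
    {s : Set E} (hs : Convex ℝ s) (hsupp : support g ⊆ s) :
    ∀ᵐ p ∂μ, p ∉ s → fderiv ℝ g p = 0 := by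
  filter_upwards [measure_eq_zero_iff_ae_notMem.1 (hs.addHaar_frontier μ)] with p hfr hp
  by_contra h
  have hcl : p ∈ closure s := closure_mono hsupp (support_fderiv_subset ℝ h)
  rw [closure_eq_self_union_frontier] at hcl
  exact hcl.elim hp hfr

theorem stmt_12_general (t : ℝ) (g : ℝ × ℝ → ℝ)
    (hg : ContDiff ℝ 1 g)
    (hg0 : ∀ p : ℝ × ℝ, p ∉ Set.Ioo (0 : ℝ) 1 ×ˢ Set.Ioo (0 : ℝ) 1 → g p = 0) :
    Real.sqrt (∫ p in Set.Ioo (0 : ℝ) 1 ×ˢ Set.Ioo (0 : ℝ) 1, (g p) ^ 2)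
      ≤ (1 / (Real.sqrt 2 * (if t ≤ 1 then 1 else t)))
        * Real.sqrt (∫ p in Set.Ioo (0 : ℝ) 1 ×ˢ Set.Ioo (0 : ℝ) 1,
            (fderiv ℝ g p (1, 0) + t * fderiv ℝ g p (0, 1)) ^ 2) := by
  have hsupp : support g ⊆ Ioo 0 1 ×ˢ Ioo 0 1 := support_subset_iff'.2 hg0
  have hdir : ∀ p, fderiv ℝ g p (1, 0) + t * fderiv ℝ g p (0, 1) = fderiv ℝ g p (1, t) := by
    intro p
    rw [← smul_eq_mul, ← map_smul, ← map_add]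
    simp
  have hderiv := ae_fderiv_eq_zero_of_support_subset volume
    ((convex_Ioo 0 1).prod (convex_Ioo 0 1)) hsupp
  simp only [hdir, ← max_def]
  rw [setIntegral_eq_integral_of_forall_compl_eq_zero fun p hp => by simp [hg0 p hp],
    setIntegral_eq_integral_of_ae_compl_eq_zero
      (hderiv.mono fun p hp hpΩ => by simp [hp hpΩ])]
  calc √(∫ p, g p ^ 2)
      ≤ √(1 / (2 * max t 1 ^ 2) * ∫ p, fderiv ℝ g p (1, t) ^ 2) :=
        Real.sqrt_le_sqrt (integral_sq_le_of_support_subset_unitSquare hg hsupp t)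
    _ = 1 / (√2 * max t 1) * √(∫ p, fderiv ℝ g p (1, t) ^ 2) := by
        rw [Real.sqrt_mul (by positivity), one_div, Real.sqrt_inv,
          Real.sqrt_mul zero_le_two, Real.sqrt_sq (by positivity), one_div]

/-- Anisotropic Poincaré inequality on the unit square `Ω = (0,1)²`:
for `g ∈ H₀¹(Ω)` (here: `C¹` vanishing outside `Ω`) and `t ≥ 0`,
`‖g‖_{L²(Ω)} ≤ (1/(√2 C(t))) ‖∂_v g + t ∂_z g‖_{L²(Ω)}`, where
`C(t) = 1` for `0 ≤ t ≤ 1` and `C(t) = t` for `t > 1`. -/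
theorem stmt_12 (t : ℝ) (ht : 0 ≤ t) (g : ℝ × ℝ → ℝ)
    (hg : ContDiff ℝ 1 g)
    (hg0 : ∀ p : ℝ × ℝ, p ∉ Set.Ioo (0 : ℝ) 1 ×ˢ Set.Ioo (0 : ℝ) 1 → g p = 0) :
    Real.sqrt (∫ p in Set.Ioo (0 : ℝ) 1 ×ˢ Set.Ioo (0 : ℝ) 1, (g p) ^ 2)
      ≤ (1 / (Real.sqrt 2 * (if t ≤ 1 then 1 else t)))
        * Real.sqrt (∫ p in Set.Ioo (0 : ℝ) 1 ×ˢ Set.Ioo (0 : ℝ) 1,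
            (fderiv ℝ g p (1, 0) + t * fderiv ℝ g p (0, 1)) ^ 2) :=
  stmt_12_general t g hg hg0
end
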